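/- arXiv:math/0208222 — 3 statements merged into one kernel-verified Lean document; each statement's English description precedes it below -/
import Mathlib

section
/- Let (C, F) be a pointed connected atomic site such that F is representable by an object A (there is a natural isomorphism Hom(A, −) ≅ F). Then every morphism X ⟶ A of C is an isomorphism; in particular every endomorphism of A is an automorphism, so Aut(A) = Hom(A, A); and if B is any other object representing F, then A is isomorphic to B. -/
open CategoryTheory Opposite

universe u v

/-- A pointed connected atomic site: a small category `C` together with a
set-valued functor `F` such that (i) every morphism is a strict epimorphism,
(ii) every `F X` is nonempty, (iii) `F` sends morphisms to surjections, and
(iv) the category of elements of `F` is cofiltered. -/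
structure IsPCAS {C : Type u} [Category.{v} C] (F : C ⥤ Type v) : Prop where
  strict_epi : ∀ {Y X Z : C} (f : Y ⟶ X) (g : Y ⟶ Z),
    (∀ {W : C} (p q : W ⟶ Y), p ≫ f = q ≫ f → p ≫ g = q ≫ g) →
    ∃! u : X ⟶ Z, f ≫ u = g
  nonempty : ∀ X : C, Nonempty (F.obj X)
  surjective : ∀ {X Y : C} (f : X ⟶ Y), Function.Surjective (F.map f)
  cofiltered : IsCofiltered F.Elements

/-!
Representability turns surjectivity of `F f` at the universal element `𝟙 A` into a section `s`
of any `f : X ⟶ A`. Being a split mono that is also an epimorphism (as every morphism of the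
site is), `s` is an isomorphism, hence so is `f`. A second representing object `B` receives a
morphism `B ⟶ A` from any point of `F A`.
-/

section

variable {C : Type u} [Category.{v} C]

theorem epi_of_existsUnique_factor {Y X : C} (f : Y ⟶ X)
    (h : ∀ {Z : C} (g : Y ⟶ Z),
      (∀ {W : C} (p q : W ⟶ Y), p ≫ f = q ≫ f → p ≫ g = q ≫ g) → ∃! u : X ⟶ Z, f ≫ u = g) :
    Epi f where
  left_cancellation a b hab := by
    obtain ⟨u, -, huniq⟩ := h (f ≫ a) fun p q hpq => by
      rw [← Category.assoc, hpq, Category.assoc]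
    exact (huniq a rfl).trans (huniq b hab.symm).symm

theorem isIso_of_isSplitEpi_of_epi_section {X Y : C} (f : X ⟶ Y) [IsSplitEpi f]
    [Epi (section_ f)] : IsIso f :=
  have := isIso_of_epi_of_isSplitMono (section_ f)
  have : IsIso (section_ f ≫ f) := by rw [IsSplitEpi.id]; infer_instance
  IsIso.of_isIso_comp_left (section_ f) f

theorem isSplitEpi_of_surjective_map_of_iso_coyoneda {F : C ⥤ Type v} {A X : C}
    (θ : coyoneda.obj (op A) ≅ F) (f : X ⟶ A) (hf : Function.Surjective (F.map f)) :
    IsSplitEpi f := by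
  obtain ⟨y, hy⟩ := hf (θ.hom.app A (𝟙 A))
  refine IsSplitEpi.mk' ⟨θ.inv.app X y, ?_⟩
  calc θ.inv.app X y ≫ f = θ.inv.app A (F.map f y) :=
        (NatTrans.naturality_apply θ.inv f y).symm
    _ = 𝟙 A := by rw [hy, Iso.hom_inv_id_app_apply]

namespace IsPCAS

variable {F : C ⥤ Type v}

theorem epi (hF : IsPCAS F) {Y X : C} (f : Y ⟶ X) : Epi f :=
  epi_of_existsUnique_factor f fun g => hF.strict_epi f g

theorem isIso_of_iso_coyoneda (hF : IsPCAS F) {A X : C} (θ : coyoneda.obj (op A) ≅ F)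
    (f : X ⟶ A) : IsIso f :=
  have := isSplitEpi_of_surjective_map_of_iso_coyoneda θ f (hF.surjective f)
  have := hF.epi (section_ f)
  isIso_of_isSplitEpi_of_epi_section f

end IsPCAS

end

/-- If `(C, F)` is a pointed connected atomic site with `F` representable by
`A`, then every morphism into `A` is an isomorphism (in particular every
endomorphism of `A` is an automorphism, so `Aut(A) = Hom(A, A)`), and any two
representing objects are isomorphic. -/
theorem stmt6 {C : Type u} [Category.{v} C] (F : C ⥤ Type v)
    (hF : IsPCAS F) (A : C) (θ : coyoneda.obj (op A) ≅ F) :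
    (∀ (X : C) (f : X ⟶ A), IsIso f) ∧
    (∀ f : A ⟶ A, IsIso f) ∧
    (∀ B : C, (coyoneda.obj (op B) ≅ F) → Nonempty (A ≅ B)) := by
  refine ⟨fun X f => hF.isIso_of_iso_coyoneda θ f, fun f => hF.isIso_of_iso_coyoneda θ f,
    fun B θ' => ?_⟩
  obtain ⟨x⟩ := hF.nonempty A
  have := hF.isIso_of_iso_coyoneda θ (θ'.inv.app A x)
  exact ⟨(asIso (θ'.inv.app A x)).symm⟩
end

section
/- Let (C, F) be a pointed connected atomic site such that F is representable by an object A. Then for every object X the right action of Aut(A) on Hom(A, X) by precomposition is transitive: for every pair of morphisms x, y : A ⟶ X there exists an automorphism h of A with h ≫ x = y. -/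
open CategoryTheory Opposite

universe u v

/-! Since `F ≅ Hom(A, -)` sends morphisms to surjections, every `x : A ⟶ X` lifts every
`y : A ⟶ X` through precomposition, `w ≫ x = y` with `w : A ⟶ A`. Lifting `𝟙 A` through `w`
gives a section `s ≫ w = 𝟙 A`; as every morphism of an atomic site is epi, the split mono `s`
is an isomorphism, hence so is `w`. -/

lemma IsPCAS.epi_s7 {C : Type u} [Category.{v} C] {F : C ⥤ Type v} (hF : IsPCAS F)
    {X Y : C} (f : X ⟶ Y) : Epi f where
  left_cancellation g h hfg :=
    (hF.strict_epi f (f ≫ g) fun _ _ hpq => by rw [reassoc_of% hpq]).unique rfl hfg.symm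

lemma exists_comp_eq_of_surjective_map {C : Type u} [Category.{v} C] {F : C ⥤ Type v}
    {A : C} (θ : coyoneda.obj (op A) ≅ F) {X Y : C} (f : X ⟶ Y)
    (hf : Function.Surjective (F.map f)) (t : A ⟶ Y) : ∃ w : A ⟶ X, w ≫ f = t := by
  obtain ⟨a, ha⟩ := hf (θ.hom.app Y t)
  refine ⟨θ.inv.app X a, (θ.app Y).toEquiv.injective ?_⟩
  change θ.hom.app Y (θ.inv.app X a ≫ f) = θ.hom.app Y t
  have hnat := θ.hom.naturality_apply f (θ.inv.app X a)
  rw [← ha]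
  simpa using hnat

lemma IsPCAS.isIso_endo_of_coyoneda_iso {C : Type u} [Category.{v} C] {F : C ⥤ Type v}
    (hF : IsPCAS F) {A : C} (θ : coyoneda.obj (op A) ≅ F) (e : A ⟶ A) : IsIso e := by
  obtain ⟨s, hs⟩ := exists_comp_eq_of_surjective_map θ e (hF.surjective e) (𝟙 A)
  have : IsSplitMono s := IsSplitMono.mk' ⟨e, hs⟩
  have := hF.epi_s7 s
  have := isIso_of_epi_of_isSplitMono s
  exact isIso_of_hom_comp_eq_id s hs

/-- If `(C, F)` is a pointed connected atomic site with `F` representable by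
`A`, then the right action of `Aut(A)` on `Hom(A, X)` by precomposition is
transitive for every object `X`. -/
theorem stmt7 {C : Type u} [Category.{v} C] (F : C ⥤ Type v)
    (hF : IsPCAS F) (A : C) (θ : coyoneda.obj (op A) ≅ F) :
    ∀ (X : C) (x y : A ⟶ X), ∃ h : Aut A, h.hom ≫ x = y := by
  intro X x y
  obtain ⟨w, hw⟩ := exists_comp_eq_of_surjective_map θ x (hF.surjective x) y
  have := hF.isIso_endo_of_coyoneda_iso θ w
  exact ⟨asIso w, hw⟩
end

section
/- (Lifting lemma, discrete case.) Let (C, F) be a pointed connected atomic site such that F is representable by an object A. Given morphisms x : A ⟶ X and y : A ⟶ Y such that every automorphism h of A with h ≫ x = x also satisfies h ≫ y = y (the stabilizer of x in Aut(A) is contained in the stabilizer of y), there exists a unique morphism u : X ⟶ Y with x ≫ u = y. -/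
/-!
Representability turns the surjectivity of `F` on morphisms into: every `A ⟶ Q` factors
through every `P ⟶ Q`. Hence every endomorphism of `A` has a section, which is an epi split
mono and so an isomorphism. By strictness of `x` it suffices to show that `p ≫ x = q ≫ x`
forces `p ≫ y = q ≫ y`; precomposing with some `a : A ⟶ W` turns `p` and `q` into
automorphisms of `A`, and `(a ≫ q)⁻¹ ≫ a ≫ p` stabilizes `x`, hence `y`.
-/

open CategoryTheory Opposite

universe u v

section

variable {C : Type u} [Category.{v} C]

lemma comp_eq_comp_of_stabilizer_le {A W X Y : C} {x : A ⟶ X} {y : A ⟶ Y}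
    (hstab : ∀ h : Aut A, h.hom ≫ x = x → h.hom ≫ y = y)
    (a : A ⟶ W) [Epi a] {p q : W ⟶ A} [IsIso (a ≫ p)] [IsIso (a ≫ q)]
    (hpq : p ≫ x = q ≫ x) : p ≫ y = q ≫ y := by
  let g : Aut A := (asIso (a ≫ q)).symm ≪≫ asIso (a ≫ p)
  have hgx : g.hom ≫ x = x := by simp [g, hpq]
  have hgy : inv (a ≫ q) ≫ a ≫ p ≫ y = y := by
    simpa [g] using hstab g hgx
  rw [← cancel_epi a, ← cancel_epi (inv (a ≫ q)), hgy]
  simp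

lemma exists_comp_eq_of_coyoneda_iso {F : C ⥤ Type v}
    (hsurj : ∀ {X Y : C} (f : X ⟶ Y), Function.Surjective (F.map f))
    {A : C} (θ : coyoneda.obj (op A) ≅ F) {P Q : C} (f : P ⟶ Q) (h : A ⟶ Q) :
    ∃ g : A ⟶ P, g ≫ f = h := by
  obtain ⟨e, he⟩ := hsurj f (θ.hom.app Q h)
  refine ⟨θ.inv.app P e, (θ.app Q).toEquiv.injective ?_⟩
  simpa [he] using NatTrans.naturality_apply θ.hom f (θ.inv.app P e)

namespace IsPCAS

variable {F : C ⥤ Type v}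

lemma epi_s9 (hF : IsPCAS F) {P Q : C} (f : P ⟶ Q) : Epi f where
  left_cancellation m n hmn := by
    obtain ⟨u, -, hu⟩ := hF.strict_epi f (f ≫ m)
      fun p q hpq => by rw [reassoc_of% hpq]
    exact (hu m rfl).trans (hu n hmn.symm).symm

variable {A : C}

lemma nonempty_hom (hF : IsPCAS F) (θ : coyoneda.obj (op A) ≅ F) (P : C) : Nonempty (A ⟶ P) :=
  ⟨θ.inv.app P (hF.nonempty P).some⟩

lemma isIso_of_endo (hF : IsPCAS F) (θ : coyoneda.obj (op A) ≅ F) (e : A ⟶ A) : IsIso e := by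
  obtain ⟨s, hs⟩ := exists_comp_eq_of_coyoneda_iso hF.surjective θ e (𝟙 A)
  have : IsSplitMono s := IsSplitMono.mk' ⟨e, hs⟩
  have := hF.epi_s9 s
  have := isIso_of_epi_of_isSplitMono s
  rw [← IsIso.inv_eq_of_hom_inv_id hs]
  infer_instance

end IsPCAS

end

/-- Lifting lemma, discrete case: if `(C, F)` is a pointed connected atomic
site with `F` representable by `A`, and `x : A ⟶ X`, `y : A ⟶ Y` are such
that the stabilizer of `x` in `Aut(A)` is contained in the stabilizer of `y`,
then there is a unique `u : X ⟶ Y` with `x ≫ u = y`. -/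
theorem stmt9 {C : Type u} [Category.{v} C] (F : C ⥤ Type v)
    (hF : IsPCAS F) (A : C) (θ : coyoneda.obj (op A) ≅ F) :
    ∀ {X Y : C} (x : A ⟶ X) (y : A ⟶ Y),
      (∀ h : Aut A, h.hom ≫ x = x → h.hom ≫ y = y) →
      ∃! u : X ⟶ Y, x ≫ u = y := by
  intro X Y x y hstab
  refine hF.strict_epi x y fun {W} p q hpq => ?_
  obtain ⟨a⟩ := hF.nonempty_hom θ W
  have := hF.epi_s9 a
  have := hF.isIso_of_endo θ (a ≫ p)
  have := hF.isIso_of_endo θ (a ≫ q)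
  exact comp_eq_comp_of_stabilizer_le hstab a hpq
end
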